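/- Let G be a finite simple graph on vertex set {1,…,n} with a generic vertex v1, and let u ∈ ℝ^n be the standard basis vector e_{v1} (u_{v1} = 1, u_i = 0 for i ≠ v1). Then for every subgroup Γ ≤ Γ0 = Aut(G) × Z2 with −1 ∉ Γ, the vector w = Σ_{γ ∈ Γ} γ·u satisfies Sym(w) = Γ. -/

import Mathlib

open Matrix

/-- The automorphism group of a graph `G` on vertex set `Fin n`,
as a subgroup of the permutation group. -/
def autSubgroup {n : ℕ} (G : SimpleGraph (Fin n)) : Subgroup (Equiv.Perm (Fin n)) where
  carrier := {π | ∀ i j, G.Adj (π i) (π j) ↔ G.Adj i j}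
  one_mem' := fun i j => Iff.rfl
  mul_mem' := fun {a b} ha hb i j => (ha (b i) (b j)).trans (hb i j)
  inv_mem' := by
    intro a ha i j
    have h := ha (a⁻¹ i) (a⁻¹ j)
    simpa using h.symm

/-- `Γ0 = Aut(G) × Z2`, with `Z2 = {1,-1} = ℤˣ` written multiplicatively. -/
def Gamma0 {n : ℕ} (G : SimpleGraph (Fin n)) : Subgroup (Equiv.Perm (Fin n) × ℤˣ) :=
  (autSubgroup G).prod ⊤

/-- The action of `Γ0` on `ℝ^n`: `((π,β)·u)_i = β * u (π⁻¹ i)`. -/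
def act {n : ℕ} (γ : Equiv.Perm (Fin n) × ℤˣ) (u : Fin n → ℝ) : Fin n → ℝ :=
  fun i => ((γ.2 : ℤ) : ℝ) * u (γ.1⁻¹ i)

/-!
Since `u = e_{v1}`, each `γ·u` is `γ.2 • e_{γ.1 v1}`, and the orbit sum `w` is `Γ`-invariant.
By genericity an element `γ` of `Γ0` is determined by `γ.1 v1` and `γ.2`; as `-1 ∉ Γ`, the
stabilizer of `v1` in `Γ` is trivial, so `w v1 = 1`. If `γ ∈ Γ0` fixes `w`, then
`w (γ.1 v1) = γ.2 ≠ 0`, so `γ.1 v1 = δ.1 v1` for some `δ ∈ Γ`, and invariance under `δ` gives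
`w (δ.1 v1) = δ.2`. Hence `γ.2 = δ.2`, so `γ = δ ∈ Γ`.
-/

section

variable {n : ℕ}

lemma act_mul (γ δ : Equiv.Perm (Fin n) × ℤˣ) (u : Fin n → ℝ) :
    act (γ * δ) u = act γ (act δ u) := by
  funext i
  simp [act, mul_assoc]

lemma act_apply_fst_apply (γ : Equiv.Perm (Fin n) × ℤˣ) (u : Fin n → ℝ) (i : Fin n) :
    act γ u (γ.1 i) = ((γ.2 : ℤ) : ℝ) * u i := by
  simp [act]

lemma act_single (γ : Equiv.Perm (Fin n) × ℤˣ) (v : Fin n) :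
    act γ (Pi.single v 1) = Pi.single (γ.1 v) ((γ.2 : ℤ) : ℝ) := by
  funext i
  simp [act, Pi.single_apply, Equiv.symm_apply_eq]

def actAddHom (γ : Equiv.Perm (Fin n) × ℤˣ) : (Fin n → ℝ) →+ (Fin n → ℝ) where
  toFun := act γ
  map_zero' := by
    funext i
    simp [act]
  map_add' u v := by
    funext i
    simp [act, mul_add]

lemma act_finsum_mem {ι : Type*} (γ : Equiv.Perm (Fin n) × ℤˣ) (f : ι → Fin n → ℝ)
    {s : Set ι} (hs : s.Finite) : act γ (∑ᶠ i ∈ s, f i) = ∑ᶠ i ∈ s, act γ (f i) :=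
  (actAddHom γ).map_finsum_mem f hs

lemma act_finsum_subgroup_of_mem {Γ : Subgroup (Equiv.Perm (Fin n) × ℤˣ)}
    {γ : Equiv.Perm (Fin n) × ℤˣ} (hγ : γ ∈ Γ) (u : Fin n → ℝ) :
    act γ (∑ᶠ δ ∈ (Γ : Set _), act δ u) = ∑ᶠ δ ∈ (Γ : Set _), act δ u := by
  rw [act_finsum_mem γ _ (Set.toFinite _)]
  refine finsum_mem_eq_of_bijOn (γ * ·) ⟨fun δ hδ => mul_mem hγ hδ,
    fun δ _ δ' _ h => mul_left_cancel h, fun δ hδ => ?_⟩ fun δ _ => (act_mul γ δ u).symm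
  exact ⟨γ⁻¹ * δ, mul_mem (inv_mem hγ) hδ, mul_inv_cancel_left γ δ⟩

lemma apply_fst_apply_of_act_eq {γ : Equiv.Perm (Fin n) × ℤˣ} {w : Fin n → ℝ}
    (h : act γ w = w) (i : Fin n) : w (γ.1 i) = ((γ.2 : ℤ) : ℝ) * w i := by
  rw [← act_apply_fst_apply, h]

lemma finsum_mem_eq_of_forall_ne {α M : Type*} [AddCommMonoid M] {s : Set α} {f : α → M}
    {a : α} (ha : a ∈ s) (h : ∀ x ∈ s, x ≠ a → f x = 0) : ∑ᶠ x ∈ s, f x = f a := by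
  rw [← finsum_mem_singleton (f := f) (a := a)]
  refine finsum_mem_inter_support_eq f s {a} (Set.ext fun x => ?_)
  by_cases hx : x = a
  · simp [hx, ha]
  · simpa [hx] using fun hxs => h x hxs hx

lemma finsum_act_single_apply (s : Set (Equiv.Perm (Fin n) × ℤˣ)) (v i : Fin n) :
    (∑ᶠ γ ∈ s, act γ (Pi.single v 1)) i =
      ∑ᶠ γ ∈ s, (Pi.single (γ.1 v) ((γ.2 : ℤ) : ℝ) : Fin n → ℝ) i := by
  simp_rw [act_single]
  exact (Pi.evalAddMonoidHom (fun _ : Fin n => ℝ) i).map_finsum_mem _ (Set.toFinite s)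

lemma finsum_act_single_apply_self {Γ : Subgroup (Equiv.Perm (Fin n) × ℤˣ)} {v : Fin n}
    (hstab : ∀ γ ∈ Γ, γ.1 v = v → γ = 1) :
    (∑ᶠ γ ∈ (Γ : Set _), act γ (Pi.single v 1)) v = 1 := by
  rw [finsum_act_single_apply, finsum_mem_eq_of_forall_ne (one_mem Γ)]
  · simp
  · exact fun γ hγ hne => Pi.single_eq_of_ne (fun h => hne (hstab γ hγ h.symm)) _

lemma exists_fst_apply_eq_of_finsum_act_single_apply_ne_zero
    {s : Set (Equiv.Perm (Fin n) × ℤˣ)} {v i : Fin n}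
    (h : (∑ᶠ γ ∈ s, act γ (Pi.single v 1)) i ≠ 0) : ∃ γ ∈ s, γ.1 v = i := by
  rw [finsum_act_single_apply] at h
  obtain ⟨γ, hγ, hne⟩ := exists_ne_zero_of_finsum_mem_ne_zero h
  exact ⟨γ, hγ, not_not.1 fun hc => hne (Pi.single_eq_of_ne (Ne.symm hc) _)⟩

section Generic

variable {G : SimpleGraph (Fin n)} {v : Fin n}

lemma eq_of_mem_Gamma0_of_generic
    (hgen : ∀ π : Equiv.Perm (Fin n), π ∈ autSubgroup G → π v = v → π = 1)
    {γ δ : Equiv.Perm (Fin n) × ℤˣ} (hγ : γ ∈ Gamma0 G) (hδ : δ ∈ Gamma0 G)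
    (hv : γ.1 v = δ.1 v) (hsign : γ.2 = δ.2) : γ = δ := by
  have hmem : δ⁻¹ * γ ∈ Gamma0 G := mul_mem (inv_mem hδ) hγ
  have hfst : δ.1⁻¹ * γ.1 = 1 := hgen _ (Subgroup.mem_prod.1 hmem).1 (by simp [hv])
  exact Prod.ext (inv_mul_eq_one.1 hfst).symm hsign

lemma eq_one_of_mem_of_fst_apply_eq
    (hgen : ∀ π : Equiv.Perm (Fin n), π ∈ autSubgroup G → π v = v → π = 1)
    {Γ : Subgroup (Equiv.Perm (Fin n) × ℤˣ)} (hΓ : Γ ≤ Gamma0 G)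
    (hneg : ((1 : Equiv.Perm (Fin n)), (-1 : ℤˣ)) ∉ Γ)
    {γ : Equiv.Perm (Fin n) × ℤˣ} (hγ : γ ∈ Γ) (hv : γ.1 v = v) : γ = 1 := by
  have hneg0 : ((1 : Equiv.Perm (Fin n)), (-1 : ℤˣ)) ∈ Gamma0 G :=
    Subgroup.mem_prod.2 ⟨one_mem _, Subgroup.mem_top _⟩
  rcases Int.units_eq_one_or γ.2 with hsign | hsign
  · exact eq_of_mem_Gamma0_of_generic hgen (hΓ hγ) (one_mem _) hv hsign
  · have := eq_of_mem_Gamma0_of_generic hgen (hΓ hγ) hneg0 hv hsign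
    exact absurd (this ▸ hγ) hneg

end Generic

end

theorem stmt1 {n : ℕ} (G : SimpleGraph (Fin n)) (v1 : Fin n)
    (hgen : ∀ π : Equiv.Perm (Fin n), π ∈ autSubgroup G → π v1 = v1 → π = 1)
    (u : Fin n → ℝ) (hu : u = fun i => if i = v1 then 1 else 0)
    (Γ : Subgroup (Equiv.Perm (Fin n) × ℤˣ)) (hΓ : Γ ≤ Gamma0 G)
    (hneg : ((1 : Equiv.Perm (Fin n)), (-1 : ℤˣ)) ∉ Γ)
    (w : Fin n → ℝ)
    (hw : w = ∑ᶠ γ ∈ (Γ : Set (Equiv.Perm (Fin n) × ℤˣ)), act γ u) :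
    {γ | γ ∈ Gamma0 G ∧ act γ w = w} = (Γ : Set (Equiv.Perm (Fin n) × ℤˣ)) := by
  have hu_single : u = Pi.single v1 1 := by
    rw [hu]
    funext i
    simp [Pi.single_apply]
  have hinv : ∀ γ ∈ Γ, act γ w = w := fun γ hγ => hw ▸ act_finsum_subgroup_of_mem hγ u
  have hw1 : w v1 = 1 := by
    rw [hw, hu_single]
    exact finsum_act_single_apply_self fun γ hγ => eq_one_of_mem_of_fst_apply_eq hgen hΓ hneg hγ
  ext γ
  refine ⟨fun ⟨hγ0, hγw⟩ => ?_, fun hγ => ⟨hΓ hγ, hinv γ hγ⟩⟩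
  have hwγ : w (γ.1 v1) = ((γ.2 : ℤ) : ℝ) := by
    rw [apply_fst_apply_of_act_eq hγw, hw1, mul_one]
  obtain ⟨δ, hδ, hδv⟩ : ∃ δ ∈ Γ, δ.1 v1 = γ.1 v1 := by
    refine exists_fst_apply_eq_of_finsum_act_single_apply_ne_zero ?_
    rw [← hu_single, ← hw, hwγ]
    simp
  have hwδ : w (δ.1 v1) = ((δ.2 : ℤ) : ℝ) := by
    rw [apply_fst_apply_of_act_eq (hinv δ hδ), hw1, mul_one]
  have hsign : γ.2 = δ.2 := by
    rw [← hδv, hwδ] at hwγ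
    exact_mod_cast hwγ.symm
  have hγδ : γ = δ := eq_of_mem_Gamma0_of_generic hgen hγ0 (hΓ hδ) hδv.symm hsign
  exact hγδ ▸ hδ
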